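/- Under the hypotheses of the previous pseudodifferential-zone flow estimate (gradient bounds |∇ₓθ| ≤ C·(λ/√Λ)·⟨x⟩^{−1/2+ε}⟨ξ⟩^{1/2+ε}, |∇_ξθ| ≤ C·(λ/√Λ)·⟨x⟩^{1/2+ε}⟨ξ⟩^{−1/2+ε} with ε ∈ (0,1/2)), and assuming additionally √Λ(T) ≤ 1, there exists C'' > 0 depending only on C and ε such that any solution q, p : [s,t₀] → ℝ^d of the Hamiltonian system q' = ∇_ξθ(τ,q,p), p' = −∇ₓθ(τ,q,p) with q(s) = y, p(s) = η satisfies, for all t ∈ [s,t₀]: |p(t) − η| ≤ C''·⟨y⟩^{−1/2+ε}·⟨η⟩^{1/2+ε}·(√Λ(t) − √Λ(s)) and |q(t) − y| ≤ C''·⟨y⟩^{1/2+ε}·⟨η⟩^{−1/2+ε}·(√Λ(t) − √Λ(s)). -/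

import Mathlib

/-!
Take `σ = 1/2 + ε` and the clock `φ = 2√Λ`, so that `φ' = λ/√Λ` and `φ(t) − φ(s) ≤ 2`.
Since `⟨·⟩^(σ-1) ≤ 1`, each of `p`, `q` moves with speed at most `C φ'` times its own weight
`⟨·⟩^σ`; subadditivity of `r ↦ r^σ` makes this affine in the displacement, and Gronwall's
inequality bounds the displacement by a constant times its initial weight `⟨·(s)⟩^σ`.
A displacement of that size changes `⟨·⟩^σ` and `⟨·⟩^(σ-1)` only by bounded factors, so
both Hamiltonian vector fields are bounded by `C' φ'` times the weights frozen at time `s`,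
and integrating against `φ` gives the estimate.
-/

/-- `Λ(t) = ∫₀ᵗ λ(s) ds`. -/
noncomputable def Lam (lam : ℝ → ℝ) (t : ℝ) : ℝ := ∫ s in (0:ℝ)..t, lam s

/-- The weight `⟨y⟩ = (e + |y|²)^{1/2}`. -/
noncomputable def jw {d : ℕ} (y : EuclideanSpace ℝ (Fin d)) : ℝ :=
  Real.sqrt (Real.exp 1 + ‖y‖ ^ 2)

open Set Real

section Weight

variable {d : ℕ}

lemma one_le_jw (y : EuclideanSpace ℝ (Fin d)) : 1 ≤ jw y :=
  one_le_sqrt.2 (by nlinarith [add_one_le_exp (1 : ℝ), sq_nonneg ‖y‖])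

lemma jw_pos (y : EuclideanSpace ℝ (Fin d)) : 0 < jw y :=
  one_pos.trans_le (one_le_jw y)

lemma jw_rpow_pos (y : EuclideanSpace ℝ (Fin d)) (r : ℝ) : 0 < jw y ^ r :=
  rpow_pos_of_pos (jw_pos y) r

lemma jw_le_jw_add_norm_sub (x y : EuclideanSpace ℝ (Fin d)) : jw x ≤ jw y + ‖x - y‖ := by
  have hy : jw y ^ 2 = exp 1 + ‖y‖ ^ 2 := sq_sqrt (by positivity)
  have hx : ‖x‖ ≤ ‖y‖ + ‖x - y‖ := norm_le_insert' x y
  have hyj : ‖y‖ ≤ jw y := by nlinarith [exp_pos 1, norm_nonneg y, jw_pos y]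
  refine sqrt_le_iff.2 ⟨add_nonneg (jw_pos y).le (norm_nonneg _), ?_⟩
  nlinarith [norm_nonneg x, norm_nonneg (x - y)]

lemma jw_rpow_le_add {σ : ℝ} (hσ0 : 0 ≤ σ) (hσ1 : σ ≤ 1) (x y : EuclideanSpace ℝ (Fin d)) :
    jw x ^ σ ≤ jw y ^ σ + 1 + ‖x - y‖ := by
  have hr : ‖x - y‖ ^ σ ≤ 1 + ‖x - y‖ := by
    rcases le_total ‖x - y‖ 1 with h | h
    · linarith [rpow_le_one (norm_nonneg _) h hσ0, norm_nonneg (x - y)]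
    · linarith [rpow_le_self_of_one_le h hσ1]
  calc jw x ^ σ ≤ (jw y + ‖x - y‖) ^ σ :=
        rpow_le_rpow (jw_pos x).le (jw_le_jw_add_norm_sub x y) hσ0
    _ ≤ jw y ^ σ + ‖x - y‖ ^ σ := rpow_add_le_add_rpow (jw_pos y).le (norm_nonneg _) hσ0 hσ1
    _ ≤ jw y ^ σ + 1 + ‖x - y‖ := by linarith

lemma jw_rpow_le_of_norm_sub_le {σ K : ℝ} (hσ0 : 0 ≤ σ) (hσ1 : σ ≤ 1)
    {v w : EuclideanSpace ℝ (Fin d)} (h : ‖v - w‖ ≤ K * jw w ^ σ) :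
    jw v ^ σ ≤ (2 + K) * jw w ^ σ := by
  linarith [jw_rpow_le_add hσ0 hσ1 v w, one_le_rpow (one_le_jw w) hσ0]

lemma jw_rpow_sub_one_le_of_norm_sub_le {σ K : ℝ} (hK : 0 ≤ K) (hσ0 : 0 ≤ σ) (hσ1 : σ ≤ 1)
    {v w : EuclideanSpace ℝ (Fin d)} (h : ‖v - w‖ ≤ K * jw w ^ σ) :
    jw v ^ (σ - 1) ≤ (2 + 2 * K) * jw w ^ (σ - 1) := by
  have hw := jw_pos w
  have hρ : 0 ≤ jw w ^ (σ - 1) := (rpow_pos_of_pos hw _).le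
  by_cases hclose : ‖v - w‖ ≤ jw w / 2
  · have hv : jw w / 2 ≤ jw v := by
      linarith [jw_le_jw_add_norm_sub w v, norm_sub_rev v w]
    have h2 : (2 : ℝ) ^ (1 - σ) ≤ 2 := by
      simpa using rpow_le_rpow_of_exponent_le one_le_two (by linarith : 1 - σ ≤ 1)
    calc jw v ^ (σ - 1) ≤ (jw w / 2) ^ (σ - 1) :=
          rpow_le_rpow_of_nonpos (by positivity) hv (by linarith)
      _ = (2 : ℝ) ^ (1 - σ) * jw w ^ (σ - 1) := by
        rw [div_rpow hw.le zero_le_two, div_eq_mul_inv, ← rpow_neg zero_le_two, neg_sub, mul_comm]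
      _ ≤ (2 + 2 * K) * jw w ^ (σ - 1) := by nlinarith [mul_nonneg hK hρ]
  · -- far from `w`, the hypothesis forces `jw w ^ (1 - σ) < 2 K`
    have hsplit : jw w ^ σ = jw w * jw w ^ (σ - 1) := by
      conv_lhs => rw [← add_sub_cancel 1 σ, rpow_add hw, rpow_one]
    have hbig : 1 < 2 * K * jw w ^ (σ - 1) := by
      have : jw w * 1 < jw w * (2 * K * jw w ^ (σ - 1)) := by nlinarith
      exact lt_of_mul_lt_mul_left this hw.le
    have hv : jw v ^ (σ - 1) ≤ 1 := rpow_le_one_of_one_le_of_nonpos (one_le_jw v) (by linarith)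
    nlinarith

lemma jw_rpow_mul_jw_rpow_sub_one_le {σ K : ℝ} (hK : 0 ≤ K) (hσ0 : 0 ≤ σ) (hσ1 : σ ≤ 1)
    {x x₀ ξ ξ₀ : EuclideanSpace ℝ (Fin d)} (hx : ‖x - x₀‖ ≤ K * jw x₀ ^ σ)
    (hξ : ‖ξ - ξ₀‖ ≤ K * jw ξ₀ ^ σ) :
    jw x ^ σ * jw ξ ^ (σ - 1) ≤ (2 + K) * (2 + 2 * K) * (jw x₀ ^ σ * jw ξ₀ ^ (σ - 1)) :=
  calc jw x ^ σ * jw ξ ^ (σ - 1)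
      ≤ ((2 + K) * jw x₀ ^ σ) * ((2 + 2 * K) * jw ξ₀ ^ (σ - 1)) :=
        mul_le_mul (jw_rpow_le_of_norm_sub_le hσ0 hσ1 hx)
          (jw_rpow_sub_one_le_of_norm_sub_le hK hσ0 hσ1 hξ) (jw_rpow_pos _ _).le
          (mul_nonneg (by linarith) (jw_rpow_pos _ _).le)
    _ = (2 + K) * (2 + 2 * K) * (jw x₀ ^ σ * jw ξ₀ ^ (σ - 1)) := by ring

end Weight

section Comparison

variable {E : Type*} [NormedAddCommGroup E] [NormedSpace ℝ E] {s t₀ : ℝ} {φ φ' : ℝ → ℝ}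
  {u u' : ℝ → E}

lemma norm_image_sub_le_of_norm_deriv_le_mul_deriv {M : ℝ} (hφc : ContinuousOn φ (Icc s t₀))
    (hφ : ∀ τ ∈ Ico s t₀, HasDerivAt φ (φ' τ) τ)
    (hu : ∀ τ ∈ Icc s t₀, HasDerivWithinAt u (u' τ) (Icc s t₀) τ)
    (hbound : ∀ τ ∈ Ico s t₀, ‖u' τ‖ ≤ M * φ' τ) :
    ∀ τ ∈ Icc s t₀, ‖u τ - u s‖ ≤ M * (φ τ - φ s) :=
  image_norm_le_of_norm_deriv_right_le_deriv_boundary' (f := fun τ => u τ - u s)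
    (ContinuousOn.sub (fun τ hτ => (hu τ hτ).continuousWithinAt) continuousOn_const)
    (fun τ hτ => ((hu τ (Ico_subset_Icc_self hτ)).mono_of_mem_nhdsWithin
      (Icc_mem_nhdsGE_of_mem hτ)).sub_const (u s)) (by simp)
    (continuousOn_const.mul (hφc.sub continuousOn_const))
    (fun τ hτ => (((hφ τ hτ).sub_const (φ s)).const_mul M).hasDerivWithinAt) hbound

/-- Gronwall's inequality in the clock `φ`; the slack `c + 1` makes the comparison with the
boundary function strict. -/
lemma norm_image_sub_le_exp_sub_one_of_norm_deriv_le {k c : ℝ} (hk : 0 < k)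
    (hφc : ContinuousOn φ (Icc s t₀)) (hφ : ∀ τ ∈ Ico s t₀, HasDerivAt φ (φ' τ) τ)
    (hφ' : ∀ τ ∈ Ico s t₀, 0 < φ' τ)
    (hu : ∀ τ ∈ Icc s t₀, HasDerivWithinAt u (u' τ) (Icc s t₀) τ)
    (hbound : ∀ τ ∈ Ico s t₀, ‖u' τ‖ ≤ k * φ' τ * (c + ‖u τ - u s‖)) :
    ∀ τ ∈ Icc s t₀, ‖u τ - u s‖ ≤ (c + 1) * (exp (k * (φ τ - φ s)) - 1) := by
  have hφs : ∀ τ ∈ Ico s t₀, HasDerivAt (fun r => k * (φ r - φ s)) (k * φ' τ) τ :=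
    fun τ hτ => ((hφ τ hτ).sub_const (φ s)).const_mul k
  refine image_norm_le_of_norm_deriv_right_lt_deriv_boundary' (f := fun τ => u τ - u s)
    (ContinuousOn.sub (fun τ hτ => (hu τ hτ).continuousWithinAt) continuousOn_const)
    (fun τ hτ => ((hu τ (Ico_subset_Icc_self hτ)).mono_of_mem_nhdsWithin
      (Icc_mem_nhdsGE_of_mem hτ)).sub_const (u s)) (by simp)
    (continuousOn_const.mul
      ((continuous_exp.comp_continuousOn
        (continuousOn_const.mul (hφc.sub continuousOn_const))).sub continuousOn_const))
    (fun τ hτ => (((hφs τ hτ).exp.sub_const 1).const_mul (c + 1)).hasDerivWithinAt) ?_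
  intro τ hτ hcontact
  have hkφ : 0 < k * φ' τ := mul_pos hk (hφ' τ hτ)
  calc ‖u' τ‖ ≤ k * φ' τ * (c + (c + 1) * (exp (k * (φ τ - φ s)) - 1)) := by
        simpa only [hcontact] using hbound τ hτ
    _ < (c + 1) * (exp (k * (φ τ - φ s)) * (k * φ' τ)) := by nlinarith

end Comparison

section Lam

variable {lam : ℝ → ℝ} {T : ℝ}

lemma Lam_pos (hlam : ContinuousOn lam (Icc 0 T)) (hpos : ∀ t ∈ Ioc 0 T, 0 < lam t) {t : ℝ}
    (ht : t ∈ Ioc 0 T) : 0 < Lam lam t :=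
  intervalIntegral.intervalIntegral_pos_of_pos_on
    ((hlam.mono (Icc_subset_Icc le_rfl ht.2)).intervalIntegrable_of_Icc ht.1.le)
    (fun x hx => hpos x ⟨hx.1, hx.2.le.trans ht.2⟩) ht.1

lemma monotoneOn_Lam (hlam : ContinuousOn lam (Icc 0 T)) (hpos : ∀ t ∈ Ioc 0 T, 0 < lam t) :
    MonotoneOn (Lam lam) (Icc 0 T) := fun _ ha _ hb hab =>
  intervalIntegral.integral_mono_interval le_rfl ha.1 hab
    ((MeasureTheory.ae_restrict_mem measurableSet_Ioc).mono fun x hx =>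
      (hpos x ⟨hx.1, hx.2.trans hb.2⟩).le)
    ((hlam.mono (Icc_subset_Icc le_rfl hb.2)).intervalIntegrable_of_Icc hb.1)

lemma continuousOn_Lam (hlam : ContinuousOn lam (Icc 0 T)) (hT : 0 ≤ T) :
    ContinuousOn (Lam lam) (Icc 0 T) := by
  have hint : MeasureTheory.IntegrableOn lam (uIcc 0 T) := by
    simpa only [uIcc_of_le hT] using hlam.integrableOn_Icc
  unfold Lam
  simpa only [uIcc_of_le hT] using intervalIntegral.continuousOn_primitive_interval hint

lemma hasDerivAt_two_mul_sqrt_Lam (hlam : ContinuousOn lam (Icc 0 T))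
    (hpos : ∀ t ∈ Ioc 0 T, 0 < lam t) {t : ℝ} (ht : t ∈ Ioo 0 T) :
    HasDerivAt (fun r => 2 * √(Lam lam r)) (lam t / √(Lam lam t)) t := by
  have hΛ : HasDerivAt (Lam lam) (lam t) t :=
    intervalIntegral.integral_hasDerivAt_right
      ((hlam.mono (Icc_subset_Icc le_rfl ht.2.le)).intervalIntegrable_of_Icc ht.1.le)
      ⟨Ioo 0 T, Ioo_mem_nhds ht.1 ht.2,
        (hlam.mono Ioo_subset_Icc_self).aestronglyMeasurable measurableSet_Ioo⟩
      (hlam.continuousAt (Icc_mem_nhds ht.1 ht.2))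
  have hΛpos := Lam_pos hlam hpos (Ioo_subset_Ioc_self ht)
  exact ((hΛ.sqrt hΛpos.ne').const_mul 2).congr_deriv (by field_simp)

end Lam

section Flow

variable {d : ℕ} {s t₀ k σ L : ℝ} {φ φ' : ℝ → ℝ}

lemma norm_image_sub_le_of_norm_deriv_le_jw_rpow (hk : 0 < k) (hσ0 : 0 ≤ σ) (hσ1 : σ ≤ 1)
    (hφc : ContinuousOn φ (Icc s t₀)) (hφ : ∀ τ ∈ Ico s t₀, HasDerivAt φ (φ' τ) τ)
    (hφ' : ∀ τ ∈ Ico s t₀, 0 < φ' τ) (hL : ∀ τ ∈ Icc s t₀, φ τ - φ s ≤ L)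
    {u u' : ℝ → EuclideanSpace ℝ (Fin d)}
    (hu : ∀ τ ∈ Icc s t₀, HasDerivWithinAt u (u' τ) (Icc s t₀) τ)
    (hbound : ∀ τ ∈ Ico s t₀, ‖u' τ‖ ≤ k * φ' τ * jw (u τ) ^ σ) :
    ∀ τ ∈ Icc s t₀, ‖u τ - u s‖ ≤ 3 * exp (k * L) * jw (u s) ^ σ := by
  intro τ hτ
  have hc : 1 ≤ jw (u s) ^ σ := one_le_rpow (one_le_jw _) hσ0
  have hgrowth := norm_image_sub_le_exp_sub_one_of_norm_deriv_le (c := jw (u s) ^ σ + 1)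
    hk hφc hφ hφ' hu
    (fun r hr => (hbound r hr).trans (mul_le_mul_of_nonneg_left
      (by linarith [jw_rpow_le_add hσ0 hσ1 (u r) (u s)]) (mul_pos hk (hφ' r hr)).le)) τ hτ
  have hexp : exp (k * (φ τ - φ s)) ≤ exp (k * L) :=
    exp_le_exp.2 (mul_le_mul_of_nonneg_left (hL τ hτ) hk.le)
  nlinarith [exp_pos (k * (φ τ - φ s))]

theorem hamiltonian_flow_deviation_le (hk : 0 < k) (hσ0 : 0 ≤ σ) (hσ1 : σ ≤ 1)
    (hφc : ContinuousOn φ (Icc s t₀)) (hφ : ∀ τ ∈ Ico s t₀, HasDerivAt φ (φ' τ) τ)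
    (hφ' : ∀ τ ∈ Ico s t₀, 0 < φ' τ) (hL : ∀ τ ∈ Icc s t₀, φ τ - φ s ≤ L)
    {q p q' p' : ℝ → EuclideanSpace ℝ (Fin d)}
    (hq : ∀ τ ∈ Icc s t₀, HasDerivWithinAt q (q' τ) (Icc s t₀) τ)
    (hp : ∀ τ ∈ Icc s t₀, HasDerivWithinAt p (p' τ) (Icc s t₀) τ)
    (hq' : ∀ τ ∈ Ico s t₀, ‖q' τ‖ ≤ k * φ' τ * jw (q τ) ^ σ * jw (p τ) ^ (σ - 1))
    (hp' : ∀ τ ∈ Ico s t₀, ‖p' τ‖ ≤ k * φ' τ * jw (q τ) ^ (σ - 1) * jw (p τ) ^ σ) :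
    ∀ t ∈ Icc s t₀,
      ‖p t - p s‖ ≤ k * (2 + 3 * exp (k * L)) * (2 + 6 * exp (k * L)) *
        jw (q s) ^ (σ - 1) * jw (p s) ^ σ * (φ t - φ s) ∧
      ‖q t - q s‖ ≤ k * (2 + 3 * exp (k * L)) * (2 + 6 * exp (k * L)) *
        jw (q s) ^ σ * jw (p s) ^ (σ - 1) * (φ t - φ s) := by
  have hweak : ∀ (v : EuclideanSpace ℝ (Fin d)), jw v ^ (σ - 1) ≤ 1 :=
    fun v => rpow_le_one_of_one_le_of_nonpos (one_le_jw v) (by linarith)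
  have hkφ : ∀ τ ∈ Ico s t₀, 0 ≤ k * φ' τ := fun τ hτ => (mul_pos hk (hφ' τ hτ)).le
  have hqs := norm_image_sub_le_of_norm_deriv_le_jw_rpow hk hσ0 hσ1 hφc hφ hφ' hL hq fun τ hτ =>
    (hq' τ hτ).trans (mul_le_of_le_one_right
      (mul_nonneg (hkφ τ hτ) (jw_rpow_pos (q τ) σ).le) (hweak (p τ)))
  have hps := norm_image_sub_le_of_norm_deriv_le_jw_rpow hk hσ0 hσ1 hφc hφ hφ' hL hp fun τ hτ =>
    (hp' τ hτ).trans (mul_le_mul_of_nonneg_right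
      (mul_le_of_le_one_right (hkφ τ hτ) (hweak (q τ))) (jw_rpow_pos (p τ) σ).le)
  have hK : 0 ≤ 3 * exp (k * L) := by positivity
  intro t ht
  constructor
  · refine norm_image_sub_le_of_norm_deriv_le_mul_deriv hφc hφ hp (fun τ hτ => ?_) t ht
    have hτ' := Ico_subset_Icc_self hτ
    calc ‖p' τ‖ ≤ k * φ' τ * (jw (p τ) ^ σ * jw (q τ) ^ (σ - 1)) := by linarith [hp' τ hτ]
      _ ≤ k * φ' τ * ((2 + 3 * exp (k * L)) * (2 + 2 * (3 * exp (k * L))) *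
          (jw (p s) ^ σ * jw (q s) ^ (σ - 1))) :=
        mul_le_mul_of_nonneg_left
          (jw_rpow_mul_jw_rpow_sub_one_le hK hσ0 hσ1 (hps τ hτ') (hqs τ hτ')) (hkφ τ hτ)
      _ = _ := by ring
  · refine norm_image_sub_le_of_norm_deriv_le_mul_deriv hφc hφ hq (fun τ hτ => ?_) t ht
    have hτ' := Ico_subset_Icc_self hτ
    calc ‖q' τ‖ ≤ k * φ' τ * (jw (q τ) ^ σ * jw (p τ) ^ (σ - 1)) := by linarith [hq' τ hτ]
      _ ≤ k * φ' τ * ((2 + 3 * exp (k * L)) * (2 + 2 * (3 * exp (k * L))) *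
          (jw (q s) ^ σ * jw (p s) ^ (σ - 1))) :=
        mul_le_mul_of_nonneg_left
          (jw_rpow_mul_jw_rpow_sub_one_le hK hσ0 hσ1 (hqs τ hτ') (hps τ hτ')) (hkφ τ hτ)
      _ = _ := by ring

end Flow

/-- Estimate (5.3) of Lemma 5.3 of the paper (case `j = k = 0`, `α = β = 0`): in the
pseudodifferential zone, `|p(t) − η| ≤ C''⟨y⟩^{−1/2+ε}⟨η⟩^{1/2+ε}(√Λ(t) − √Λ(s))` and
`|q(t) − y| ≤ C''⟨y⟩^{1/2+ε}⟨η⟩^{−1/2+ε}(√Λ(t) − √Λ(s))`, with `C''` depending only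
on `C` and `ε`. -/
theorem pd_zone_flow_deviation
    (d : ℕ) (C ε : ℝ) (hC : 0 < C) (hε0 : 0 < ε) (hε1 : ε < 1/2) :
    ∃ C'' : ℝ, 0 < C'' ∧ ∀ T : ℝ, 0 < T →
      ∀ lam : ℝ → ℝ, ContinuousOn lam (Set.Icc 0 T) →
        (∀ t ∈ Set.Icc 0 T, 0 ≤ lam t) → (∀ t ∈ Set.Ioc 0 T, 0 < lam t) →
        Real.sqrt (Lam lam T) ≤ 1 →
      ∀ θ : ℝ → EuclideanSpace ℝ (Fin d) → EuclideanSpace ℝ (Fin d) → ℝ,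
        (∀ t ∈ Set.Ioc 0 T, ∀ (x ξ : EuclideanSpace ℝ (Fin d)),
          DifferentiableAt ℝ (fun x' => θ t x' ξ) x) →
        (∀ t ∈ Set.Ioc 0 T, ∀ (x ξ : EuclideanSpace ℝ (Fin d)),
          DifferentiableAt ℝ (fun ξ' => θ t x ξ') ξ) →
        (∀ t ∈ Set.Ioc 0 T, ∀ (x ξ : EuclideanSpace ℝ (Fin d)),
          ‖gradient (fun x' => θ t x' ξ) x‖ ≤
            C * (lam t / Real.sqrt (Lam lam t)) *
              jw x ^ (-(1/2 : ℝ) + ε) * jw ξ ^ ((1/2 : ℝ) + ε)) →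
        (∀ t ∈ Set.Ioc 0 T, ∀ (x ξ : EuclideanSpace ℝ (Fin d)),
          ‖gradient (fun ξ' => θ t x ξ') ξ‖ ≤
            C * (lam t / Real.sqrt (Lam lam t)) *
              jw x ^ ((1/2 : ℝ) + ε) * jw ξ ^ (-(1/2 : ℝ) + ε)) →
      ∀ s t₀ : ℝ, 0 < s → s ≤ t₀ → t₀ ≤ T →
      ∀ q p : ℝ → EuclideanSpace ℝ (Fin d),
        (∀ τ ∈ Set.Icc s t₀, HasDerivWithinAt q
          (gradient (fun ξ' => θ τ (q τ) ξ') (p τ)) (Set.Icc s t₀) τ) →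
        (∀ τ ∈ Set.Icc s t₀, HasDerivWithinAt p
          (-(gradient (fun x' => θ τ x' (p τ)) (q τ))) (Set.Icc s t₀) τ) →
      ∀ t ∈ Set.Icc s t₀,
        ‖p t - p s‖ ≤ C'' * jw (q s) ^ (-(1/2 : ℝ) + ε) * jw (p s) ^ ((1/2 : ℝ) + ε) *
            (Real.sqrt (Lam lam t) - Real.sqrt (Lam lam s)) ∧
        ‖q t - q s‖ ≤ C'' * jw (q s) ^ ((1/2 : ℝ) + ε) * jw (p s) ^ (-(1/2 : ℝ) + ε) *
            (Real.sqrt (Lam lam t) - Real.sqrt (Lam lam s)) := by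
  have hσ : -(1/2 : ℝ) + ε = (1/2 + ε) - 1 := by ring
  refine ⟨2 * (C * (2 + 3 * exp (C * 2)) * (2 + 6 * exp (C * 2))), by positivity, ?_⟩
  intro T _ lam hlam _ hpos hΛT θ _ _ hgx hgξ s t₀ hs hst₀ ht₀ q p hq hp t ht
  have hT : 0 ≤ T := hs.le.trans (hst₀.trans ht₀)
  have hIco : Ico s t₀ ⊆ Ioo 0 T := fun τ hτ => ⟨hs.trans_le hτ.1, hτ.2.trans_le ht₀⟩
  have hIoc : Ico s t₀ ⊆ Ioc 0 T := hIco.trans Ioo_subset_Ioc_self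
  have hIcc : Icc s t₀ ⊆ Icc 0 T := Icc_subset_Icc hs.le ht₀
  have hL : ∀ τ ∈ Icc s t₀, 2 * √(Lam lam τ) - 2 * √(Lam lam s) ≤ 2 := fun τ hτ => by
    have hτT := monotoneOn_Lam hlam hpos (hIcc hτ) ⟨hT, le_rfl⟩ (hτ.2.trans ht₀)
    nlinarith [sqrt_le_sqrt hτT, sqrt_nonneg (Lam lam s)]
  obtain ⟨hpt, hqt⟩ := hamiltonian_flow_deviation_le (φ := fun r => 2 * √(Lam lam r))
    (σ := 1/2 + ε) hC (by linarith) (by linarith)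
    (continuousOn_const.mul ((continuousOn_Lam hlam hT).mono hIcc).sqrt)
    (fun τ hτ => hasDerivAt_two_mul_sqrt_Lam hlam hpos (hIco hτ))
    (fun τ hτ => div_pos (hpos τ (hIoc hτ)) (sqrt_pos.2 (Lam_pos hlam hpos (hIoc hτ)))) hL hq hp
    (fun τ hτ => by simpa only [hσ] using hgξ τ (hIoc hτ) (q τ) (p τ))
    (fun τ hτ => by simpa only [hσ, norm_neg] using hgx τ (hIoc hτ) (q τ) (p τ)) t ht
  rw [hσ]
  constructor
  · convert hpt using 1; ring
  · convert hqt using 1; ring
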